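/- Let X be a reflexive real Banach space (the canonical embedding of X into its bidual X** is surjective). If X contains a 𝔇-point, then both X and X* contain sequential super Δ-points; in particular, neither X nor X* has the Kadets–Klee property. -/

import Mathlib

open NormedSpace Topology Filter

/-- `x` is a 𝔇-point of the real Banach space `X`. -/
def IsDPoint (X : Type*) [NormedAddCommGroup X] [NormedSpace ℝ X] (x : X) : Prop :=
  ‖x‖ = 1 ∧ ∀ f : StrongDual ℝ X, ‖f‖ = 1 → f x = 1 → ∀ ε : ℝ, 0 < ε →
    sSup ((fun y => ‖x - y‖) '' {y : X | ‖y‖ ≤ 1 ∧ 1 - ε < f y}) = 2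

/-- `z` is a sequential super Δ-point of the Banach space `Z`: there is a sequence in the
unit sphere of `Z` converging weakly to `z` whose distances to `z` tend to `2`. -/
def IsSequentialSuperDeltaPoint (Z : Type*) [NormedAddCommGroup Z] [NormedSpace ℝ Z]
    (z : Z) : Prop :=
  ‖z‖ = 1 ∧ ∃ zs : ℕ → Z, (∀ n, ‖zs n‖ = 1) ∧
    (∀ f : StrongDual ℝ Z, Tendsto (fun n => f (zs n)) atTop (nhds (f z))) ∧
    Tendsto (fun n => ‖z - zs n‖) atTop (nhds 2)

/-- A Banach space `Z` has the Kadets–Klee property if weak convergence of sequences on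
the unit sphere implies norm convergence. -/
def KadetsKlee (Z : Type*) [NormedAddCommGroup Z] [NormedSpace ℝ Z] : Prop :=
  ∀ (zs : ℕ → Z) (z : Z), (∀ n, ‖zs n‖ = 1) → ‖z‖ = 1 →
    (∀ f : StrongDual ℝ Z, Tendsto (fun n => f (zs n)) atTop (nhds (f z))) →
    Tendsto (fun n => ‖z - zs n‖) atTop (nhds 0)


/-!
Start from `Q₀ ∈ D(x)`. Since `x` is a 𝔇-point, every `Q ∈ D(x)` has unit vectors `yₖ` in
ever thinner slices of `Q` together with norm-one functionals `pₖ` with `pₖ x → 1` and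
`pₖ yₖ → -1`. Reflexivity gives weak limits `y∞`, `p∞` along a subsequence, with `Q y∞ = 1` and
`p∞ ∈ D(x)`. Iterating with `Qₙ₊₁ = (Qₙ + p∞ₙ)/2` shrinks the faces `{v ∈ B_X : Qₙ v = 1}`, so
`p∞ₙ` takes the value `1` at every later `y∞ₘ`. Weak limits `v` of the `y∞ₙ` and `g` of the
`p∞ₙ` then satisfy `g v = 1`, and a diagonal choice of `yₖ` and `pₖ` from the rounds converges
weakly to `v` and `g` while `pₖ yₖ → -1`; this forces both distances to tend to `2`. The
diagonal choice is possible because the weak topology on the unit ball of a separable reflexive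
space is tested by countably many functionals.
-/

open TopologicalSpace

section Reflexive

variable {E : Type*} [NormedAddCommGroup E] [NormedSpace ℝ E]

def IsReflexive (E : Type*) [NormedAddCommGroup E] [NormedSpace ℝ E] : Prop :=
  Function.Surjective (inclusionInDoubleDual ℝ E)

def WeakTendsto (u : ℕ → E) (v : E) : Prop :=
  ∀ φ : StrongDual ℝ E, Tendsto (fun n => φ (u n)) atTop (𝓝 (φ v))

lemma abs_apply_le_norm {g : StrongDual ℝ E} (hg : ‖g‖ ≤ 1) (v : E) : |g v| ≤ ‖v‖ := by
  simpa using g.le_of_opNorm_le hg v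

lemma norm_eq_one_of_apply_eq_one {g : StrongDual ℝ E} {v : E} (hg : ‖g‖ ≤ 1) (hv : ‖v‖ ≤ 1)
    (hgv : g v = 1) : ‖g‖ = 1 ∧ ‖v‖ = 1 := by
  have h := g.le_opNorm v
  rw [hgv, norm_one] at h
  constructor <;> nlinarith [norm_nonneg g, norm_nonneg v]

lemma apply_eq_one_of_midpoint {g h : StrongDual ℝ E} {v : E} (hg : ‖g‖ ≤ 1) (hh : ‖h‖ ≤ 1)
    (hv : ‖v‖ ≤ 1) (hgh : ((2⁻¹ : ℝ) • (g + h)) v = 1) : g v = 1 ∧ h v = 1 := by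
  have hgv := (abs_le.1 ((abs_apply_le_norm hg v).trans hv)).2
  have hhv := (abs_le.1 ((abs_apply_le_norm hh v).trans hv)).2
  replace hgh : 2⁻¹ * g v + 2⁻¹ * h v = 1 := by simpa using hgh
  constructor <;> linarith

lemma WeakTendsto.norm_le {u : ℕ → E} {v : E} (h : WeakTendsto u v) (hu : ∀ n, ‖u n‖ ≤ 1) :
    ‖v‖ ≤ 1 :=
  norm_le_dual_bound ℝ v zero_le_one fun φ => le_of_tendsto (h φ).norm <|
    Eventually.of_forall fun n => by simpa [mul_comm] using φ.le_opNorm_of_le (hu n)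

lemma Submodule.exists_dual_eq_zero_ne_zero (W : Submodule ℝ E) (hW : IsClosed (W : Set E))
    {v : E} (hv : v ∉ W) : ∃ φ : StrongDual ℝ E, (∀ w ∈ W, φ w = 0) ∧ φ v ≠ 0 := by
  obtain ⟨φ, u, hφW, hφv⟩ := geometric_hahn_banach_closed_point W.convex hW hv
  have hu : 0 < u := by simpa using hφW 0 W.zero_mem
  refine ⟨φ, fun w hw => ?_, (hu.trans hφv).ne'⟩
  by_contra hne
  have := hφW ((u / φ w) • w) (W.smul_mem _ hw)
  rw [map_smul, smul_eq_mul, div_mul_cancel₀ u hne] at this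
  exact lt_irrefl u this

lemma isSeparable_topologicalClosure_span {S : Set E} (hS : S.Countable) :
    IsSeparable ((Submodule.span ℝ S).topologicalClosure : Set E) := by
  rw [Submodule.topologicalClosure_coe]
  exact hS.isSeparable.span.closure

lemma separableSpace_of_forall_dual_eq_zero (x : ℕ → E)
    (hx : ∀ φ : StrongDual ℝ E, (∀ j, φ (x j) = 0) → φ = 0) : SeparableSpace E := by
  set S := Submodule.span ℝ (Set.range x)
  have hS : ∀ v, v ∈ S.topologicalClosure := by
    intro v
    by_contra hv
    obtain ⟨φ, hφS, hφv⟩ :=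
      S.topologicalClosure.exists_dual_eq_zero_ne_zero S.isClosed_topologicalClosure hv
    refine hφv ?_
    rw [hx φ fun j => hφS _ (S.le_topologicalClosure (Submodule.subset_span ⟨j, rfl⟩))]
    rfl
  have := isSeparable_topologicalClosure_span (Set.countable_range x)
  rwa [Set.eq_univ_of_forall hS, isSeparable_univ_iff] at this

lemma separableSpace_of_separableSpace_dual [SeparableSpace (StrongDual ℝ E)] :
    SeparableSpace E := by
  set F := denseSeq (StrongDual ℝ E)
  have hx : ∀ j, ∃ x : E, ‖x‖ ≤ 1 ∧ ‖F j‖ ≤ 2 * ‖F j x‖ := by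
    intro j
    rcases (norm_nonneg (F j)).eq_or_lt with h | h
    · exact ⟨0, by simp, by simp [← h]⟩
    · obtain ⟨x, hx1, hx⟩ := (F j).exists_lt_apply_of_lt_opNorm (half_lt_self h)
      exact ⟨x, hx1.le, by linarith⟩
  choose x hx1 hFx using hx
  refine separableSpace_of_forall_dual_eq_zero x fun φ hφ => ?_
  have hφF : ∀ j, ‖φ‖ ≤ 3 * dist φ (F j) := by
    intro j
    have hFφ : ‖F j (x j)‖ ≤ dist φ (F j) :=
      calc ‖F j (x j)‖ = ‖(φ - F j) (x j)‖ := by simp [hφ]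
      _ ≤ ‖φ - F j‖ * 1 := (φ - F j).le_opNorm_of_le (hx1 j)
      _ = dist φ (F j) := by rw [mul_one, dist_eq_norm]
    have := norm_le_insert' φ (F j)
    rw [← dist_eq_norm] at this
    linarith [hFx j]
  refine norm_le_zero_iff.1 (le_of_forall_pos_le_add fun ε hε => ?_)
  obtain ⟨j, hj⟩ := Metric.denseRange_iff.1 (denseRange_denseSeq _) φ (ε / 3) (by positivity)
  linarith [hφF j]

lemma IsReflexive.dual (hE : IsReflexive E) : IsReflexive (StrongDual ℝ E) := by
  intro Φ
  refine ⟨Φ.comp (inclusionInDoubleDual ℝ E), ContinuousLinearMap.ext fun F => ?_⟩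
  obtain ⟨z, rfl⟩ := hE F
  rfl

lemma IsReflexive.submodule (hE : IsReflexive E) (W : Submodule ℝ E) (hW : IsClosed (W : Set E)) :
    IsReflexive W := by
  intro Λ
  obtain ⟨x, hx⟩ := hE (Λ.comp ((ContinuousLinearMap.compL ℝ W E ℝ).flip W.subtypeL))
  have hxΛ : ∀ φ : StrongDual ℝ E, φ x = Λ (φ.comp W.subtypeL) := fun φ => congr($hx φ)
  have hxW : x ∈ W := by
    by_contra hxW
    obtain ⟨φ, hφW, hφx⟩ := W.exists_dual_eq_zero_ne_zero hW hxW
    have : φ.comp W.subtypeL = 0 := ContinuousLinearMap.ext fun w => hφW w w.2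
    exact hφx (by rw [hxΛ, this, map_zero])
  refine ⟨⟨x, hxW⟩, ContinuousLinearMap.ext fun ψ => ?_⟩
  obtain ⟨φ, hφ, -⟩ := exists_extension_norm_eq W ψ
  have : φ.comp W.subtypeL = ψ := ContinuousLinearMap.ext hφ
  calc ψ ⟨x, hxW⟩ = φ x := (hφ _).symm
  _ = Λ ψ := by rw [hxΛ, this]

lemma IsReflexive.separableSpace_dual [SeparableSpace E] (hE : IsReflexive E) :
    SeparableSpace (StrongDual ℝ E) :=
  have := hE.denseRange.separableSpace (inclusionInDoubleDual ℝ E).continuous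
  separableSpace_of_separableSpace_dual

def UnifDenseOn (ψ : ℕ → StrongDual ℝ E) (S : Set E) : Prop :=
  ∀ φ : StrongDual ℝ E, ∀ ε > 0, ∃ j, ∀ w ∈ S, |φ w - ψ j w| < ε

lemma IsReflexive.exists_unifDenseOn (hE : IsReflexive E) {S : Set E} (hS : S.Countable)
    (hS1 : ∀ w ∈ S, ‖w‖ ≤ 1) : ∃ ψ, UnifDenseOn ψ S := by
  set W := (Submodule.span ℝ S).topologicalClosure
  have hSW : S ⊆ W := Submodule.subset_span.trans (Submodule.span ℝ S).le_topologicalClosure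
  have : SeparableSpace W := (isSeparable_topologicalClosure_span hS).separableSpace
  have := (hE.submodule W (Submodule.span ℝ S).isClosed_topologicalClosure).separableSpace_dual
  choose ext hext using fun χ : StrongDual ℝ W => exists_extension_norm_eq W χ
  refine ⟨fun j => ext (denseSeq (StrongDual ℝ W) j), fun φ ε hε => ?_⟩
  obtain ⟨j, hj⟩ := Metric.denseRange_iff.1 (denseRange_denseSeq (StrongDual ℝ W))
    (φ.comp W.subtypeL) ε hε
  set χ := denseSeq (StrongDual ℝ W) j
  refine ⟨j, fun w hw => ?_⟩
  have hχw : ext χ w = χ ⟨w, hSW hw⟩ := (hext χ).1 ⟨w, hSW hw⟩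
  calc |φ w - ext χ w| = ‖(φ.comp W.subtypeL - χ) ⟨w, hSW hw⟩‖ := by rw [hχw]; rfl
  _ ≤ ‖φ.comp W.subtypeL - χ‖ * 1 := (φ.comp W.subtypeL - χ).le_opNorm_of_le (hS1 w hw)
  _ < ε := by rwa [mul_one, ← dist_eq_norm (φ.comp W.subtypeL)]

lemma UnifDenseOn.tendsto_sub {ψ : ℕ → StrongDual ℝ E} {S : Set E} (hψ : UnifDenseOn ψ S)
    {ι : Type*} {l : Filter ι} {a b : ι → E} (ha : ∀ i, a i ∈ S) (hb : ∀ i, b i ∈ S)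
    (h : ∀ j, Tendsto (fun i => ψ j (a i) - ψ j (b i)) l (𝓝 0)) (φ : StrongDual ℝ E) :
    Tendsto (fun i => φ (a i) - φ (b i)) l (𝓝 0) := by
  rw [Metric.tendsto_nhds]
  intro ε hε
  obtain ⟨j, hj⟩ := hψ φ (ε / 3) (by positivity)
  filter_upwards [Metric.tendsto_nhds.1 (h j) (ε / 3) (by positivity)] with i hi
  rw [Real.dist_eq, sub_zero] at hi ⊢
  have ha' := abs_lt.1 (hj _ (ha i))
  have hb' := abs_lt.1 (hj _ (hb i))
  have hi' := abs_lt.1 hi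
  exact abs_lt.2 ⟨by linarith, by linarith⟩

lemma IsReflexive.exists_weakTendsto_subseq (hE : IsReflexive E) {u : ℕ → E}
    (hu : ∀ n, ‖u n‖ ≤ 1) : ∃ v σ, StrictMono σ ∧ WeakTendsto (u ∘ σ) v := by
  obtain ⟨ψ, hψ⟩ := hE.exists_unifDenseOn (Set.countable_range u) (by rintro _ ⟨n, rfl⟩; exact hu n)
  have hbdd : ∀ n, (fun j => ψ j (u n)) ∈ Set.univ.pi fun j => Set.Icc (-‖ψ j‖) ‖ψ j‖ :=
    fun n j _ => abs_le.1 (by simpa using (ψ j).le_opNorm_of_le (hu n))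
  obtain ⟨_, _, σ, hσ, hlim⟩ := (isCompact_univ_pi fun j => isCompact_Icc).tendsto_subseq hbdd
  have hcauchy : ∀ φ : StrongDual ℝ E, CauchySeq fun n => φ (u (σ n)) := by
    intro φ
    have hψσ : ∀ j, Tendsto (fun p : ℕ × ℕ => ψ j (u (σ p.1)) - ψ j (u (σ p.2))) atTop (𝓝 0) := by
      intro j
      have := tendsto_pi_nhds.1 hlim j
      rw [← prod_atTop_atTop_eq]
      simpa using (this.comp tendsto_fst).sub (this.comp tendsto_snd)
    rw [cauchySeq_iff_tendsto_dist_atTop_0]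
    simpa [Real.dist_eq] using (hψ.tendsto_sub (fun p => ⟨_, rfl⟩) (fun p => ⟨_, rfl⟩) hψσ φ).abs
  choose l hl using fun φ => cauchySeq_tendsto_of_complete (hcauchy φ)
  obtain ⟨v, hv⟩ := hE (continuousLinearMapOfTendsto
    (fun n => inclusionInDoubleDual ℝ E (u (σ n))) (tendsto_pi_nhds.2 hl))
  refine ⟨v, σ, hσ, fun φ => ?_⟩
  have : φ v = l φ := congr($hv φ)
  rw [this]
  exact hl φ

end Reflexive

lemma tendsto_of_dist_lt_one_div {α : Type*} [PseudoMetricSpace α] {a : ℕ → α} {c : α}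
    (h : ∀ n, dist (a n) c < 1 / (n + 1)) : Tendsto a atTop (𝓝 c) :=
  tendsto_iff_dist_tendsto_zero.2 <|
    squeeze_zero (fun _ => dist_nonneg) (fun n => (h n).le) tendsto_one_div_add_atTop_nhds_zero_nat

def DiagonallyEventually (P : (ℕ → ℕ) → Prop) : Prop :=
  ∃ T : ℕ → ℕ → Prop, (∀ n, ∀ᶠ k in atTop, T n k) ∧ ∀ K : ℕ → ℕ, (∀ n, T n (K n)) → P K

lemma DiagonallyEventually.and {P Q : (ℕ → ℕ) → Prop} (hP : DiagonallyEventually P)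
    (hQ : DiagonallyEventually Q) : DiagonallyEventually fun K => P K ∧ Q K := by
  obtain ⟨T₁, hT₁, hP⟩ := hP
  obtain ⟨T₂, hT₂, hQ⟩ := hQ
  exact ⟨fun n k => T₁ n k ∧ T₂ n k, fun n => (hT₁ n).and (hT₂ n),
    fun K hK => ⟨hP K fun n => (hK n).1, hQ K fun n => (hK n).2⟩⟩

lemma DiagonallyEventually.exists {P : (ℕ → ℕ) → Prop} (hP : DiagonallyEventually P) :
    ∃ K, P K := by
  obtain ⟨T, hT, hP⟩ := hP
  choose K hK using fun n => (hT n).exists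
  exact ⟨K, hP K hK⟩

lemma diagonallyEventually_tendsto {α : Type*} [PseudoMetricSpace α] {a : ℕ → ℕ → α}
    {c : ℕ → α} {l : α} (ha : ∀ n, Tendsto (a n) atTop (𝓝 (c n))) (hc : Tendsto c atTop (𝓝 l)) :
    DiagonallyEventually fun K => Tendsto (fun n => a n (K n)) atTop (𝓝 l) := by
  refine ⟨fun n k => dist (a n k) (c n) < 1 / (n + 1),
    fun n => (ha n).eventually (Metric.ball_mem_nhds _ Nat.one_div_pos_of_nat), fun K hK => ?_⟩
  rw [tendsto_iff_dist_tendsto_zero] at hc ⊢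
  refine squeeze_zero (fun _ => dist_nonneg) (fun n => dist_triangle _ (c n) l) ?_
  simpa using (squeeze_zero (fun _ => dist_nonneg) (fun n => (hK n).le)
    tendsto_one_div_add_atTop_nhds_zero_nat).add hc

lemma IsReflexive.diagonallyEventually_weakTendsto {E : Type*} [NormedAddCommGroup E]
    [NormedSpace ℝ E] (hE : IsReflexive E) {y : ℕ → ℕ → E} {yLim : ℕ → E} {v : E}
    (hy1 : ∀ n k, ‖y n k‖ ≤ 1) (hy : ∀ n, WeakTendsto (y n) (yLim n))
    (hyLim : WeakTendsto yLim v) :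
    DiagonallyEventually fun K => WeakTendsto (fun n => y n (K n)) v := by
  have hyLim1 : ∀ n, ‖yLim n‖ ≤ 1 := fun n => (hy n).norm_le (hy1 n)
  obtain ⟨ψ, hψ⟩ := hE.exists_unifDenseOn
    ((Set.countable_range (Function.uncurry y)).union (Set.countable_range yLim))
    (by rintro _ (⟨⟨n, k⟩, rfl⟩ | ⟨n, rfl⟩); exacts [hy1 n k, hyLim1 n])
  refine ⟨fun n k => ∀ j ≤ n, dist (ψ j (y n k)) (ψ j (yLim n)) < 1 / (n + 1), fun n => ?_,
    fun K hK φ => ?_⟩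
  · exact (Set.finite_le_nat n).eventually_all.2 fun j _ =>
      (hy n (ψ j)).eventually (Metric.ball_mem_nhds _ Nat.one_div_pos_of_nat)
  · have hψK : ∀ j, Tendsto (fun n => ψ j (y n (K n)) - ψ j (yLim n)) atTop (𝓝 0) := fun j =>
      squeeze_zero_norm' ((eventually_ge_atTop j).mono fun n hn => (hK n j hn).le)
        tendsto_one_div_add_atTop_nhds_zero_nat
    simpa using (hψ.tendsto_sub (fun n => Or.inl ⟨(n, K n), rfl⟩) (fun n => Or.inr ⟨n, rfl⟩)
      hψK φ).add (hyLim φ)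

lemma isSequentialSuperDeltaPoint_of_tendsto {Z : Type*} [NormedAddCommGroup Z] [NormedSpace ℝ Z]
    {z : Z} {zs : ℕ → Z} {g : ℕ → StrongDual ℝ Z} (hz : ‖z‖ = 1) (hzs : ∀ n, ‖zs n‖ = 1)
    (hzsz : WeakTendsto zs z) (hg : ∀ n, ‖g n‖ ≤ 1)
    (hgz : Tendsto (fun n => g n z) atTop (𝓝 1))
    (hgzs : Tendsto (fun n => g n (zs n)) atTop (𝓝 (-1))) :
    IsSequentialSuperDeltaPoint Z z := by
  refine ⟨hz, zs, hzs, hzsz, ?_⟩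
  have hlower : Tendsto (fun n => g n (z - zs n)) atTop (𝓝 2) := by
    simpa [map_sub, one_add_one_eq_two] using hgz.sub hgzs
  refine tendsto_of_tendsto_of_tendsto_of_le_of_le hlower tendsto_const_nhds (fun n => ?_)
    fun n => ?_
  · exact (le_abs_self _).trans (abs_apply_le_norm (hg n) _)
  · calc ‖z - zs n‖ ≤ ‖z‖ + ‖zs n‖ := norm_sub_le _ _
    _ = 2 := by rw [hz, hzs]; norm_num

lemma IsSequentialSuperDeltaPoint.not_kadetsKlee {Z : Type*} [NormedAddCommGroup Z]
    [NormedSpace ℝ Z] {z : Z} (hz : IsSequentialSuperDeltaPoint Z z) : ¬ KadetsKlee Z := by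
  obtain ⟨hz1, zs, hzs1, hzsz, hzs2⟩ := hz
  intro hKK
  have := tendsto_nhds_unique hzs2 (hKK zs z hzs1 hz1 hzsz)
  norm_num at this

section DPoint

variable {X : Type*} [NormedAddCommGroup X] [NormedSpace ℝ X] {x : X}

lemma IsDPoint.exists_far (hx : IsDPoint X x) {Q : StrongDual ℝ X} (hQ : ‖Q‖ ≤ 1)
    (hQx : Q x = 1) {ε : ℝ} (hε : 0 < ε) (hε1 : ε ≤ 1) :
    ∃ (y : X) (p : StrongDual ℝ X), ‖y‖ = 1 ∧ ‖p‖ = 1 ∧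
      dist (Q y) 1 < ε ∧ dist (p x) 1 < ε ∧ dist (p y) (-1) < ε := by
  obtain ⟨hx1, hD⟩ := hx
  have hQ1 : ‖Q‖ = 1 := (norm_eq_one_of_apply_eq_one hQ hx1.le hQx).1
  have hne : ((fun y => ‖x - y‖) '' {y : X | ‖y‖ ≤ 1 ∧ 1 - ε < Q y}).Nonempty :=
    ⟨_, x, ⟨hx1.le, by linarith⟩, rfl⟩
  obtain ⟨_, ⟨y, ⟨hy1, hQy⟩, rfl⟩, hfar⟩ :=
    exists_lt_of_lt_csSup hne (show 2 - ε < _ by rw [hD Q hQ1 hQx ε hε]; linarith)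
  simp only at hfar
  obtain ⟨p, hp1, hpxy⟩ := exists_dual_vector ℝ (x - y) (by intro h; rw [h] at hfar; linarith)
  replace hpxy : p x - p y = ‖x - y‖ := by simpa using hpxy
  have hpx := abs_le.1 ((abs_apply_le_norm hp1.le x).trans hx1.le)
  have hpy := abs_le.1 ((abs_apply_le_norm hp1.le y).trans hy1)
  have hpy_neg : p y < 0 := by linarith
  have hy0 : 0 < ‖y‖ := norm_pos_iff.2 fun h => by
    rw [h, map_zero] at hpy_neg
    exact lt_irrefl _ hpy_neg
  set ŷ := ‖y‖⁻¹ • y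
  have hŷ : ‖ŷ‖ = 1 := by rw [norm_smul, norm_inv, norm_norm, inv_mul_cancel₀ hy0.ne']
  have hQŷ : Q y ≤ Q ŷ := by
    rw [map_smul, smul_eq_mul, inv_mul_eq_div]; exact le_div_self (by linarith) hy0 hy1
  have hpŷ : p ŷ ≤ p y := by
    rw [map_smul, smul_eq_mul, inv_mul_eq_div, div_le_iff₀ hy0]; nlinarith
  have hQŷ1 := abs_le.1 ((abs_apply_le_norm hQ ŷ).trans hŷ.le)
  have hpŷ1 := abs_le.1 ((abs_apply_le_norm hp1.le ŷ).trans hŷ.le)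
  refine ⟨ŷ, p, hŷ, hp1, ?_, ?_, ?_⟩ <;> rw [Real.dist_eq, abs_sub_lt_iff] <;> constructor <;>
    linarith

/-- One round of the construction: norm-one `y k` in ever thinner slices of `Q ∈ D(x)`, with
norm-one `p k` almost norming `x - y k`, and the weak limits of both sequences. -/
structure FarRound (x : X) where
  Q : StrongDual ℝ X
  y : ℕ → X
  p : ℕ → StrongDual ℝ X
  yLim : X
  pLim : StrongDual ℝ X
  norm_Q_le : ‖Q‖ ≤ 1
  Q_apply_x : Q x = 1
  norm_y : ∀ k, ‖y k‖ = 1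
  norm_p : ∀ k, ‖p k‖ = 1
  weakTendsto_y : WeakTendsto y yLim
  weakTendsto_p : WeakTendsto p pLim
  tendsto_p_y : Tendsto (fun k => p k (y k)) atTop (𝓝 (-1))
  Q_apply_yLim : Q yLim = 1
  pLim_apply_x : pLim x = 1

lemma IsDPoint.exists_farRound (hX : IsReflexive X) (hx : IsDPoint X x) {Q : StrongDual ℝ X}
    (hQ : ‖Q‖ ≤ 1) (hQx : Q x = 1) : ∃ R : FarRound x, R.Q = Q := by
  choose y p hy hp hQy hpx hpy using fun k : ℕ =>
    hx.exists_far hQ hQx (ε := 1 / (k + 1)) Nat.one_div_pos_of_nat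
      (div_le_one_of_le₀ (by simp) (by positivity))
  obtain ⟨yLim, σ, hσ, hyLim⟩ := hX.exists_weakTendsto_subseq fun k => (hy k).le
  obtain ⟨pLim, τ, hτ, hpLim⟩ := hX.dual.exists_weakTendsto_subseq (u := p ∘ σ) fun k => (hp _).le
  have hστ := (hσ.comp hτ).tendsto_atTop
  refine ⟨⟨Q, y ∘ σ ∘ τ, p ∘ σ ∘ τ, yLim, pLim, hQ, hQx, fun k => hy _, fun k => hp _,
    fun φ => (hyLim φ).comp hτ.tendsto_atTop, hpLim, (tendsto_of_dist_lt_one_div hpy).comp hστ,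
    ?_, ?_⟩, rfl⟩
  · exact tendsto_nhds_unique ((hyLim Q).comp hτ.tendsto_atTop)
      ((tendsto_of_dist_lt_one_div hQy).comp hστ)
  · exact tendsto_nhds_unique (hpLim (inclusionInDoubleDual ℝ X x))
      ((tendsto_of_dist_lt_one_div hpx).comp hστ)

namespace FarRound

lemma norm_yLim_le (R : FarRound x) : ‖R.yLim‖ ≤ 1 :=
  R.weakTendsto_y.norm_le fun k => (R.norm_y k).le

lemma norm_pLim_le (R : FarRound x) : ‖R.pLim‖ ≤ 1 :=
  R.weakTendsto_p.norm_le fun k => (R.norm_p k).le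

noncomputable def next (R : FarRound x) : StrongDual ℝ X := (2⁻¹ : ℝ) • (R.Q + R.pLim)

lemma norm_next_le (R : FarRound x) : ‖R.next‖ ≤ 1 := by
  rw [next, norm_smul]
  have := norm_add_le R.Q R.pLim
  have := R.norm_Q_le
  have := R.norm_pLim_le
  norm_num
  linarith

lemma next_apply_x (R : FarRound x) : R.next x = 1 := by
  simp [next, R.Q_apply_x, R.pLim_apply_x]
  norm_num

noncomputable def step (hX : IsReflexive X) (hx : IsDPoint X x) (R : FarRound x) : FarRound x :=
  (hx.exists_farRound hX R.norm_next_le R.next_apply_x).choose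

lemma step_Q (hX : IsReflexive X) (hx : IsDPoint X x) (R : FarRound x) :
    (R.step hX hx).Q = R.next :=
  (hx.exists_farRound hX R.norm_next_le R.next_apply_x).choose_spec

lemma pLim_apply_eq_one_of_lt {R : ℕ → FarRound x} (hR : ∀ n, (R (n + 1)).Q = (R n).next)
    {n m : ℕ} (hnm : n < m) {v : X} (hv : ‖v‖ ≤ 1) (hQv : (R m).Q v = 1) : (R n).pLim v = 1 := by
  induction m, hnm using Nat.le_induction with
  | base =>
    rw [hR] at hQv
    exact (apply_eq_one_of_midpoint (R n).norm_Q_le (R n).norm_pLim_le hv hQv).2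
  | succ m _ ih =>
    rw [hR] at hQv
    exact ih (apply_eq_one_of_midpoint (R m).norm_Q_le (R m).norm_pLim_le hv hQv).1

lemma isSequentialSuperDeltaPoint_of_weakTendsto (hX : IsReflexive X) (R : ℕ → FarRound x)
    {v : X} {g : StrongDual ℝ X} (hv : WeakTendsto (fun n => (R n).yLim) v)
    (hg : WeakTendsto (fun n => (R n).pLim) g) (hgv : ∀ n, (R n).pLim v = 1) :
    IsSequentialSuperDeltaPoint X v ∧ IsSequentialSuperDeltaPoint (StrongDual ℝ X) g := by
  have hpv : ∀ n, Tendsto (fun k => (R n).p k v) atTop (𝓝 1) := fun n => by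
    simpa [hgv n] using (R n).weakTendsto_p (inclusionInDoubleDual ℝ X v)
  obtain ⟨K, ⟨hy, hp⟩, hpKv, hpKy⟩ :=
    (((hX.diagonallyEventually_weakTendsto (fun n k => ((R n).norm_y k).le)
      (fun n => (R n).weakTendsto_y) hv).and
    (hX.dual.diagonallyEventually_weakTendsto (fun n k => ((R n).norm_p k).le)
      (fun n => (R n).weakTendsto_p) hg)).and
    ((diagonallyEventually_tendsto hpv tendsto_const_nhds).and
      (diagonallyEventually_tendsto (fun n => (R n).tendsto_p_y) tendsto_const_nhds))).exists
  have hgv' : g v = 1 := by simpa [hgv, eq_comm] using hg (inclusionInDoubleDual ℝ X v)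
  obtain ⟨hg1, hv1⟩ := norm_eq_one_of_apply_eq_one
    (hg.norm_le fun n => (R n).norm_pLim_le) (hv.norm_le fun n => (R n).norm_yLim_le) hgv'
  refine ⟨isSequentialSuperDeltaPoint_of_tendsto hv1 (fun n => (R n).norm_y _) hy
    (fun n => ((R n).norm_p _).le) hpKv hpKy, isSequentialSuperDeltaPoint_of_tendsto hg1
    (fun n => (R n).norm_p _) hp (g := fun n => inclusionInDoubleDual ℝ X ((R n).y (K n)))
    (fun n => (double_dual_bound ℝ X _).trans ((R n).norm_y _).le) ?_ hpKy⟩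
  simpa [hgv'] using hy g

end FarRound

lemma IsDPoint.exists_sequentialSuperDeltaPoints (hX : IsReflexive X) (hx : IsDPoint X x) :
    ∃ (v : X) (g : StrongDual ℝ X),
      IsSequentialSuperDeltaPoint X v ∧ IsSequentialSuperDeltaPoint (StrongDual ℝ X) g := by
  obtain ⟨f, hf1, hfx⟩ := exists_dual_vector ℝ x (by rw [hx.1]; exact one_ne_zero)
  obtain ⟨R₀, -⟩ := hx.exists_farRound hX hf1.le (by simpa [hx.1] using hfx)
  set R : ℕ → FarRound x := fun n => (FarRound.step hX hx)^[n] R₀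
  have hR : ∀ n, (R (n + 1)).Q = (R n).next := fun n => by
    simp only [R, Function.iterate_succ_apply', FarRound.step_Q]
  obtain ⟨v, σ, hσ, hv⟩ := hX.exists_weakTendsto_subseq fun n => (R n).norm_yLim_le
  obtain ⟨g, τ, hτ, hg⟩ := hX.dual.exists_weakTendsto_subseq fun n => (R (σ n)).norm_pLim_le
  have hpv : ∀ n, (R n).pLim v = 1 := fun n => tendsto_nhds_unique (hv (R n).pLim)
    (tendsto_const_nhds.congr' ((eventually_gt_atTop n).mono fun m hm =>
      (FarRound.pLim_apply_eq_one_of_lt hR (hm.trans_le hσ.le_apply) (R _).norm_yLim_le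
        (R _).Q_apply_yLim).symm))
  exact ⟨v, g, FarRound.isSequentialSuperDeltaPoint_of_weakTendsto hX (fun n => R (σ (τ n)))
    (fun φ => (hv φ).comp hτ.tendsto_atTop) hg fun n => hpv _⟩

end DPoint

theorem reflexive_dPoint_implies_sequentialSuperDeltaPoints
    (X : Type*) [NormedAddCommGroup X] [NormedSpace ℝ X]
    (hrefl : Function.Surjective (NormedSpace.inclusionInDoubleDual ℝ X))
    (h : ∃ x : X, IsDPoint X x) :
    (∃ x : X, IsSequentialSuperDeltaPoint X x) ∧
    (∃ g : StrongDual ℝ X, IsSequentialSuperDeltaPoint (StrongDual ℝ X) g) ∧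
    ¬ KadetsKlee X ∧ ¬ KadetsKlee (StrongDual ℝ X) := by
  obtain ⟨x, hx⟩ := h
  obtain ⟨v, g, hv, hg⟩ := hx.exists_sequentialSuperDeltaPoints hrefl
  exact ⟨⟨v, hv⟩, ⟨g, hg⟩, hv.not_kadetsKlee, hg.not_kadetsKlee⟩
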